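/- For the random walk on the half-line, suppose 𝔼[(Z^+)²] < ∞ (with 𝔼[Z] = −μ < 0 as above, and no boundedness assumption on Z). Then the chain is tame with respect to the scale function V(x) = (x+1)²: there exist d' ≥ 1 such that {x : V(x) ≤ d'} is a small set, and constants λ̃ > 0, β ∈ (0, 1/4) and b' < ∞ such that, with the taming function F(z) = ⌈λ̃·z^{1/2}⌉ for z > d' and F(z) = 1 for z ≤ d', the F-subsampled kernel Q_F(x,·) = P^{F(V(x))}(x,·) satisfies Q_F V(x) ≤ β·V(x) + b'·1_{[V(x) ≤ d']} for all x ≥ 0. (Note that β < 1/4 means log β < (1/2)^{-1}·log(1 − 1/2), the inequality required for tameness with exponent δ = 1/2.) -/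

import Mathlib

open MeasureTheory ProbabilityTheory ENNReal

/-- `n`-fold composition power of a kernel. -/
noncomputable def kpow {𝓧 : Type*} [MeasurableSpace 𝓧]
    (P : ProbabilityTheory.Kernel 𝓧 𝓧) : ℕ → ProbabilityTheory.Kernel 𝓧 𝓧
  | 0 => ProbabilityTheory.Kernel.id
  | n + 1 => P.comp (kpow P n)

/-- `C` is a small set for the kernel `P`. -/
def IsSmallSet {𝓧 : Type*} [MeasurableSpace 𝓧]
    (P : ProbabilityTheory.Kernel 𝓧 𝓧) (C : Set 𝓧) : Prop :=
  ∃ m : ℕ, 0 < m ∧ ∃ ε : ℝ, 0 < ε ∧ ε ≤ 1 ∧ ∃ ν : Measure 𝓧, IsProbabilityMeasure ν ∧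
    ∀ x ∈ C, ∀ E : Set 𝓧, MeasurableSet E → ENNReal.ofReal ε * ν E ≤ (kpow P m) x E

/-!
Write `V x = (x + 1) ^ 2`. Since `max (y + z) 0 = y + max z (-y)`, the one-step increment of `V`
at `y`, divided by `y + 1`, converges by dominated convergence to `2 𝔼 Z = -2μ` (the square
integrability of `Z⁺` gives the dominating function). Hence `PV ≤ V - (7/4) μ √V + K` on
`[0, ∞)`. Summing this along the chain and using `𝔼ₓ (X_k + 1) ≥ x + 1 - kμ` gives, for
`n = ⌈(x + 1) / μ⌉`, `𝔼ₓ V(X_n) ≤ V x - (7/4) μ ∑_{k<n} (x + 1 - kμ) + nK ≤ (1/8 + 1/16) V x`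
once `x` is large.

Sublevel sets of `V` are small: with positive probability `ν (Z ≤ -η)` a step moves down by at
least `η`, so from `[0, a]` the chain sits at `0` after `⌈a / η⌉ + 1` steps with probability
bounded below, and `δ₀` is a minorizing measure.
-/

open Filter Set Topology

namespace kpow

variable {𝓧 : Type*} [MeasurableSpace 𝓧] {P : Kernel 𝓧 𝓧}

@[simp]
lemma zero_apply (x : 𝓧) : kpow P 0 x = Measure.dirac x := Kernel.id_apply x

lemma succ_eq (n : ℕ) : kpow P (n + 1) = P ∘ₖ kpow P n := rfl

lemma succ_eq' (n : ℕ) : kpow P (n + 1) = kpow P n ∘ₖ P := by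
  induction n with
  | zero => rw [succ_eq, show kpow P 0 = Kernel.id from rfl, Kernel.comp_id, Kernel.id_comp]
  | succ n ih => rw [succ_eq (n + 1), ih, ← Kernel.comp_assoc, ← succ_eq, ih]

instance isMarkovKernel [IsMarkovKernel P] (n : ℕ) : IsMarkovKernel (kpow P n) := by
  induction n with
  | zero => show IsMarkovKernel Kernel.id; infer_instance
  | succ n ih => rw [succ_eq]; infer_instance

lemma ae_mem {S : Set 𝓧} (hS : MeasurableSet S) (hPS : ∀ x ∈ S, ∀ᵐ y ∂P x, y ∈ S) (n : ℕ)
    {x : 𝓧} (hx : x ∈ S) : ∀ᵐ y ∂kpow P n x, y ∈ S := by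
  induction n with
  | zero => rw [zero_apply]; exact (ae_dirac_iff (p := (· ∈ S)) hS).2 hx
  | succ n ih =>
    rw [succ_eq]
    exact Kernel.ae_comp_of_ae_ae hS (ih.mono hPS)

lemma le_lintegral_add [IsMarkovKernel P] {U : 𝓧 → ℝ≥0∞} {a : ℝ≥0∞} (hU : Measurable U)
    (hdrift : ∀ y, U y ≤ ∫⁻ z, U z ∂P y + a) (n : ℕ) (x : 𝓧) :
    U x ≤ ∫⁻ y, U y ∂kpow P n x + n * a := by
  induction n with
  | zero => simp [lintegral_dirac' x hU]
  | succ n ih =>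
    calc U x ≤ ∫⁻ y, U y ∂kpow P n x + n * a := ih
      _ ≤ ∫⁻ y, (∫⁻ z, U z ∂P y + a) ∂kpow P n x + n * a := by gcongr; exact hdrift _
      _ = ∫⁻ y, U y ∂kpow P (n + 1) x + (n + 1 : ℕ) * a := by
        rw [lintegral_add_right _ measurable_const, lintegral_const, measure_univ, succ_eq,
          Kernel.lintegral_comp _ _ _ hU]
        push_cast
        ring

lemma lintegral_add_sum_le [IsMarkovKernel P] {V W : 𝓧 → ℝ≥0∞} {K : ℝ≥0∞} {S : Set 𝓧}
    (hS : MeasurableSet S) (hPS : ∀ x ∈ S, ∀ᵐ y ∂P x, y ∈ S) (hV : Measurable V)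
    (hW : Measurable W) (hdrift : ∀ y ∈ S, ∫⁻ z, V z ∂P y + W y ≤ V y + K) (n : ℕ)
    {x : 𝓧} (hx : x ∈ S) :
    ∫⁻ y, V y ∂kpow P n x + ∑ k ∈ Finset.range n, ∫⁻ y, W y ∂kpow P k x ≤ V x + n * K := by
  induction n with
  | zero => simp [lintegral_dirac' x hV]
  | succ n ih =>
    calc ∫⁻ y, V y ∂kpow P (n + 1) x + ∑ k ∈ Finset.range (n + 1), ∫⁻ y, W y ∂kpow P k x
        = ∫⁻ y, (∫⁻ z, V z ∂P y + W y) ∂kpow P n x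
            + ∑ k ∈ Finset.range n, ∫⁻ y, W y ∂kpow P k x := by
          rw [succ_eq, Kernel.lintegral_comp _ _ _ hV, Finset.sum_range_succ,
            lintegral_add_right _ hW]
          ring
      _ ≤ ∫⁻ y, (V y + K) ∂kpow P n x + ∑ k ∈ Finset.range n, ∫⁻ y, W y ∂kpow P k x := by
          gcongr 1
          exact lintegral_mono_ae ((ae_mem hS hPS n hx).mono hdrift)
      _ = (∫⁻ y, V y ∂kpow P n x + ∑ k ∈ Finset.range n, ∫⁻ y, W y ∂kpow P k x) + K := by
          rw [lintegral_add_right _ measurable_const, lintegral_const, measure_univ]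
          ring
      _ ≤ V x + n * K + K := by gcongr
      _ = V x + (n + 1 : ℕ) * K := by push_cast; ring

end kpow

lemma IsSmallSet.mono {𝓧 : Type*} [MeasurableSpace 𝓧] {P : Kernel 𝓧 𝓧} {C D : Set 𝓧}
    (hC : IsSmallSet P C) (hDC : D ⊆ C) : IsSmallSet P D := by
  obtain ⟨m, hm, ε, hε, hε1, ν, hν, h⟩ := hC
  exact ⟨m, hm, ε, hε, hε1, ν, hν, fun x hx => h x (hDC hx)⟩

lemma exists_pos_measure_Iic_neg {ν : Measure ℝ} (hneg : ∫ z, z ∂ν < 0) :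
    ∃ η : ℝ, 0 < η ∧ 0 < ν (Iic (-η)) := by
  by_contra! h
  have hnull : ν (Iio 0) = 0 := by
    refine measure_mono_null (fun z (hz : z < 0) => ?_)
      (measure_iUnion_null fun n : ℕ => nonpos_iff_eq_zero.1 (h (1 / (n + 1)) (by positivity)))
    obtain ⟨n, hn⟩ := exists_nat_one_div_lt (neg_pos.2 hz)
    exact mem_iUnion.2 ⟨n, by rw [Set.mem_Iic]; linarith⟩
  have hnonneg : 0 ≤ ∫ z, z ∂ν :=
    integral_nonneg_of_ae ((measure_eq_zero_iff_ae_notMem.1 hnull).mono fun z hz => not_lt.1 hz)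
  linarith

namespace ReflectedWalk

variable {ν : Measure ℝ} {P : Kernel ℝ ℝ}

/-- `((max (y + z) 0 + 1) ^ 2 - (y + 1) ^ 2) / (y + 1)`, in a form dominated uniformly in
`y ≥ 0`. -/
noncomputable def scaledIncrement (y z : ℝ) : ℝ := 2 * max z (-y) + max z (-y) ^ 2 / (y + 1)

lemma sq_max_add_add_one_eq {y : ℝ} (hy : y + 1 ≠ 0) (z : ℝ) :
    (max (y + z) 0 + 1) ^ 2 = (y + 1) ^ 2 + (y + 1) * scaledIncrement y z := by
  have hmax : max (y + z) 0 = y + max z (-y) := by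
    rw [← max_add_add_left, add_neg_cancel]
  rw [hmax, scaledIncrement]
  field_simp
  ring

lemma abs_scaledIncrement_le {y : ℝ} (hy : 0 ≤ y) (z : ℝ) :
    |scaledIncrement y z| ≤ 3 * |z| + max z 0 ^ 2 := by
  rw [scaledIncrement]
  rcases le_total 0 z with hz | hz
  · have hdiv : z ^ 2 / (y + 1) ≤ z ^ 2 := div_le_self (sq_nonneg z) (by linarith)
    rw [max_eq_left (by linarith : -y ≤ z), max_eq_left hz, abs_of_nonneg hz,
      abs_of_nonneg (by positivity)]
    linarith
  · set w := max z (-y)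
    have hw0 : w ≤ 0 := max_le hz (by linarith)
    have hzw : z ≤ w := le_max_left _ _
    have hyw : -y ≤ w := le_max_right _ _
    -- `w ^ 2 ≤ |z| * y`, since `|w| ≤ |z|` and `|w| ≤ y`
    have hdiv : w ^ 2 / (y + 1) ≤ -z := by
      rw [div_le_iff₀ (by linarith)]
      nlinarith
    rw [max_eq_right hz, abs_of_nonpos hz, abs_le]
    constructor <;> nlinarith [div_nonneg (sq_nonneg w) (by linarith : (0 : ℝ) ≤ y + 1)]

lemma tendsto_scaledIncrement (z : ℝ) :
    Tendsto (fun y => scaledIncrement y z) atTop (𝓝 (2 * z)) := by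
  have hlim : Tendsto (fun y : ℝ => 2 * z + z ^ 2 / (y + 1)) atTop (𝓝 (2 * z + 0)) :=
    tendsto_const_nhds.add
      (tendsto_const_nhds.div_atTop (tendsto_atTop_add_const_right _ 1 tendsto_id))
  rw [add_zero] at hlim
  refine hlim.congr' ?_
  filter_upwards [eventually_ge_atTop (-z)] with y hy
  rw [scaledIncrement, max_eq_left (neg_le.1 hy)]

lemma measurable_scaledIncrement (y : ℝ) : Measurable (scaledIncrement y) := by
  unfold scaledIncrement
  fun_prop

lemma integrable_scaledIncrement (hint : Integrable (fun z : ℝ => z) ν)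
    (hsq : Integrable (fun z : ℝ => max z 0 ^ 2) ν) {y : ℝ} (hy : 0 ≤ y) :
    Integrable (scaledIncrement y) ν :=
  ((hint.abs.const_mul 3).add hsq).mono' (measurable_scaledIncrement y).aestronglyMeasurable
    (ae_of_all _ fun z => by simpa using abs_scaledIncrement_le hy z)

lemma tendsto_integral_scaledIncrement (hint : Integrable (fun z : ℝ => z) ν)
    (hsq : Integrable (fun z : ℝ => max z 0 ^ 2) ν) :
    Tendsto (fun y => ∫ z, scaledIncrement y z ∂ν) atTop (𝓝 (2 * ∫ z, z ∂ν)) := by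
  rw [← integral_const_mul]
  exact tendsto_integral_filter_of_dominated_convergence _
    (Eventually.of_forall fun y => (measurable_scaledIncrement y).aestronglyMeasurable)
    ((eventually_ge_atTop 0).mono fun y hy =>
      ae_of_all _ fun z => by simpa using abs_scaledIncrement_le hy z)
    ((hint.abs.const_mul 3).add hsq) (ae_of_all _ tendsto_scaledIncrement)

lemma integrable_sq_max_add_add_one [IsFiniteMeasure ν] (hint : Integrable (fun z : ℝ => z) ν)
    (hsq : Integrable (fun z : ℝ => max z 0 ^ 2) ν) {y : ℝ} (hy : 0 ≤ y) :
    Integrable (fun z => (max (y + z) 0 + 1) ^ 2) ν := by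
  simp_rw [sq_max_add_add_one_eq (by linarith : y + 1 ≠ 0)]
  exact (integrable_const _).add ((integrable_scaledIncrement hint hsq hy).const_mul _)

lemma integral_sq_max_add_add_one [IsProbabilityMeasure ν]
    (hint : Integrable (fun z : ℝ => z) ν) (hsq : Integrable (fun z : ℝ => max z 0 ^ 2) ν)
    {y : ℝ} (hy : 0 ≤ y) :
    ∫ z, (max (y + z) 0 + 1) ^ 2 ∂ν = (y + 1) ^ 2 + (y + 1) * ∫ z, scaledIncrement y z ∂ν := by
  simp_rw [sq_max_add_add_one_eq (by linarith : y + 1 ≠ 0)]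
  rw [integral_add (integrable_const _) ((integrable_scaledIncrement hint hsq hy).const_mul _),
    integral_const, integral_const_mul, probReal_univ, one_smul]

lemma exists_integral_sq_max_add_add_one_le [IsProbabilityMeasure ν]
    (hint : Integrable (fun z : ℝ => z) ν) (hsq : Integrable (fun z : ℝ => max z 0 ^ 2) ν)
    {c : ℝ} (hc : 2 * ∫ z, z ∂ν < -c) :
    ∃ K : ℝ, 0 ≤ K ∧ ∀ y : ℝ, 0 ≤ y →
      ∫ z, (max (y + z) 0 + 1) ^ 2 ∂ν ≤ (y + 1) ^ 2 - c * (y + 1) + K := by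
  obtain ⟨Y, hY⟩ := eventually_atTop.1
    ((tendsto_integral_scaledIncrement hint hsq).eventually (gt_mem_nhds hc))
  set M := ∫ z, (3 * |z| + max z 0 ^ 2) ∂ν
  have hM : 0 ≤ M := integral_nonneg fun z => by positivity
  set Y' := max Y 0
  refine ⟨(Y' + 1) * (M + |c|), by positivity, fun y hy => ?_⟩
  rw [integral_sq_max_add_add_one hint hsq hy]
  rcases le_total Y y with hYy | hyY
  · have hI := mul_le_mul_of_nonneg_left (hY y hYy).le (by linarith : 0 ≤ y + 1)
    have hK : 0 ≤ (Y' + 1) * (M + |c|) := by positivity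
    linarith
  · have hI : ∫ z, scaledIncrement y z ∂ν ≤ M :=
      integral_mono (integrable_scaledIncrement hint hsq hy) ((hint.abs.const_mul 3).add hsq)
        fun z => (le_abs_self _).trans (abs_scaledIncrement_le hy z)
    have hyY' : y + 1 ≤ Y' + 1 := by linarith [le_max_left Y 0]
    have hIM : (y + 1) * ∫ z, scaledIncrement y z ∂ν ≤ (Y' + 1) * M :=
      (mul_le_mul_of_nonneg_left hI (by linarith)).trans (by gcongr)
    have hcY : c * (y + 1) ≤ |c| * (Y' + 1) :=
      (mul_le_mul_of_nonneg_right (le_abs_self c) (by linarith)).trans (by gcongr)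
    linarith

lemma pow_le_kpow_apply_zero (hP : ∀ x, P x = ν.map (fun z => max (x + z) 0)) {η : ℝ}
    (hη : 0 ≤ η) (k : ℕ) {x : ℝ} (hx0 : 0 ≤ x) (hxk : x ≤ k * η) :
    ν (Iic (-η)) ^ k ≤ kpow P k x {0} := by
  induction k generalizing x with
  | zero =>
    obtain rfl : x = 0 := le_antisymm (by simpa using hxk) hx0
    simp
  | succ k ih =>
    have hstep : ν (Iic (-η)) ≤ P x (Icc 0 (k * η)) := by
      rw [hP, Measure.map_apply (by fun_prop) measurableSet_Icc]
      refine measure_mono fun z (hz : z ≤ -η) => ⟨le_max_right _ _, max_le ?_ (by positivity)⟩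
      push_cast at hxk
      linarith
    rw [kpow.succ_eq', Kernel.comp_apply' _ _ _ (measurableSet_singleton 0)]
    calc ν (Iic (-η)) ^ (k + 1) ≤ ν (Iic (-η)) ^ k * P x (Icc 0 (k * η)) := by
          rw [pow_succ]; gcongr
      _ = ∫⁻ _ in Icc 0 (k * η), ν (Iic (-η)) ^ k ∂P x := (setLIntegral_const _ _).symm
      _ ≤ ∫⁻ y in Icc 0 (k * η), kpow P k y {0} ∂P x :=
          setLIntegral_mono ((kpow P k).measurable_coe (measurableSet_singleton 0))
            fun y hy => ih hy.1 hy.2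
      _ ≤ ∫⁻ y, kpow P k y {0} ∂P x := setLIntegral_le_lintegral _ _

lemma isSmallSet_Icc [IsProbabilityMeasure ν] (hP : ∀ x, P x = ν.map (fun z => max (x + z) 0))
    (hneg : ∫ z, z ∂ν < 0) (a : ℝ) : IsSmallSet P (Icc 0 a) := by
  obtain ⟨η, hη, hc⟩ := exists_pos_measure_Iic_neg hneg
  set m := ⌈a / η⌉₊ + 1
  have hc_ne_top : ν (Iic (-η)) ≠ ∞ := measure_ne_top _ _
  refine ⟨m, Nat.succ_pos _, (ν (Iic (-η))).toReal ^ m,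
    pow_pos (toReal_pos hc.ne' hc_ne_top) _,
    pow_le_one₀ toReal_nonneg (by simpa using toReal_mono one_ne_top prob_le_one),
    Measure.dirac 0, inferInstance, ?_⟩
  rintro x ⟨hx0, hxa⟩ E hE
  have hxm : x ≤ m * η := by
    have : a ≤ ⌈a / η⌉₊ * η := (div_le_iff₀ hη).1 (Nat.le_ceil _)
    push_cast [m]
    linarith
  rw [ofReal_pow toReal_nonneg, ofReal_toReal hc_ne_top, Measure.dirac_apply' _ hE]
  by_cases h0 : (0 : ℝ) ∈ E
  · simpa [h0] using (pow_le_kpow_apply_zero hP hη.le m hx0 hxm).trans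
      (measure_mono (singleton_subset_iff.2 h0))
  · simp [h0]

lemma ae_mem_Ici (hP : ∀ x, P x = ν.map (fun z => max (x + z) 0)) (x : ℝ) :
    ∀ᵐ y ∂P x, y ∈ Ici 0 := by
  rw [hP]
  exact (ae_map_iff (by fun_prop) measurableSet_Ici).2 (ae_of_all _ fun z => le_max_right _ _)

lemma ofReal_add_one_le_lintegral [IsProbabilityMeasure ν]
    (hP : ∀ x, P x = ν.map (fun z => max (x + z) 0)) (hint : Integrable (fun z : ℝ => z) ν)
    {μm : ℝ} (hmean : ∫ z, z ∂ν = -μm) (x : ℝ) :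
    ENNReal.ofReal (x + 1) ≤ ∫⁻ y, ENNReal.ofReal (y + 1) ∂P x + ENNReal.ofReal μm := by
  have hshift : Integrable (fun z => x + 1 + z) ν := (integrable_const _).add hint
  have hI : Integrable (fun z => max (x + z) 0 + 1) ν :=
    ((integrable_const x).add hint).pos_part.add (integrable_const 1)
  rw [hP, lintegral_map (by fun_prop) (by fun_prop),
    ← ofReal_integral_eq_lintegral_ofReal hI (ae_of_all _ fun z => by positivity)]
  have h : x + 1 ≤ ∫ z, (max (x + z) 0 + 1) ∂ν + μm :=
    calc x + 1 = ∫ z, (x + 1 + z) ∂ν + μm := by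
          rw [integral_add (integrable_const _) hint, integral_const, hmean]
          simp
      _ ≤ ∫ z, (max (x + z) 0 + 1) ∂ν + μm := by
          gcongr 1
          exact integral_mono hshift hI fun z => by linarith [le_max_left (x + z) 0]
  exact (ofReal_le_ofReal h).trans ofReal_add_le

lemma ofReal_sub_le_lintegral_kpow [IsProbabilityMeasure ν] [IsMarkovKernel P]
    (hP : ∀ x, P x = ν.map (fun z => max (x + z) 0)) (hint : Integrable (fun z : ℝ => z) ν)
    {μm : ℝ} (hmean : ∫ z, z ∂ν = -μm) (hμm : 0 ≤ μm) (k : ℕ) (x : ℝ) :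
    ENNReal.ofReal (x + 1 - μm * k) ≤ ∫⁻ y, ENNReal.ofReal (y + 1) ∂kpow P k x := by
  have h := kpow.le_lintegral_add (by fun_prop) (ofReal_add_one_le_lintegral hP hint hmean) k x
  rwa [ofReal_sub _ (by positivity), tsub_le_iff_right, mul_comm,
    ofReal_mul (Nat.cast_nonneg k), ofReal_natCast]

lemma lintegral_sq_add_le [IsProbabilityMeasure ν]
    (hP : ∀ x, P x = ν.map (fun z => max (x + z) 0)) (hint : Integrable (fun z : ℝ => z) ν)
    (hsq : Integrable (fun z : ℝ => max z 0 ^ 2) ν) {c K : ℝ} (hc : 0 ≤ c)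
    (hK : ∀ y : ℝ, 0 ≤ y → ∫ z, (max (y + z) 0 + 1) ^ 2 ∂ν ≤ (y + 1) ^ 2 - c * (y + 1) + K)
    {y : ℝ} (hy : 0 ≤ y) :
    ∫⁻ w, ENNReal.ofReal ((w + 1) ^ 2) ∂P y + ENNReal.ofReal (c * (y + 1))
      ≤ ENNReal.ofReal ((y + 1) ^ 2) + ENNReal.ofReal K := by
  rw [hP, lintegral_map (by fun_prop) (by fun_prop),
    ← ofReal_integral_eq_lintegral_ofReal (integrable_sq_max_add_add_one hint hsq hy)
      (ae_of_all _ fun z => sq_nonneg _),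
    ← ofReal_add (integral_nonneg fun z => sq_nonneg _) (by positivity)]
  exact (ofReal_le_ofReal (by linarith [hK y hy])).trans ofReal_add_le

lemma lintegral_sq_kpow_add_le [IsProbabilityMeasure ν] [IsMarkovKernel P]
    (hP : ∀ x, P x = ν.map (fun z => max (x + z) 0)) (hint : Integrable (fun z : ℝ => z) ν)
    {μm : ℝ} (hmean : ∫ z, z ∂ν = -μm) (hμm : 0 ≤ μm)
    (hsq : Integrable (fun z : ℝ => max z 0 ^ 2) ν) {c K : ℝ} (hc : 0 ≤ c)
    (hK : ∀ y : ℝ, 0 ≤ y → ∫ z, (max (y + z) 0 + 1) ^ 2 ∂ν ≤ (y + 1) ^ 2 - c * (y + 1) + K)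
    (n : ℕ) {x : ℝ} (hx : 0 ≤ x) :
    ∫⁻ y, ENNReal.ofReal ((y + 1) ^ 2) ∂kpow P n x
        + ENNReal.ofReal (c * ∑ k ∈ Finset.range n, (x + 1 - μm * k))
      ≤ ENNReal.ofReal ((x + 1) ^ 2) + n * ENNReal.ofReal K := by
  refine le_trans ?_ (kpow.lintegral_add_sum_le measurableSet_Ici (fun x _ => ae_mem_Ici hP x)
    (by fun_prop) (by fun_prop) (fun y hy => lintegral_sq_add_le hP hint hsq hc hK hy) n hx)
  gcongr
  rw [Finset.mul_sum]
  refine (Finset.le_sum_of_subadditive _ ofReal_zero.le (fun _ _ => ofReal_add_le) _ _).trans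
    (Finset.sum_le_sum fun k _ => ?_)
  simp_rw [ofReal_mul hc]
  rw [lintegral_const_mul _ (by fun_prop)]
  gcongr
  exact ofReal_sub_le_lintegral_kpow hP hint hmean hμm k x

end ReflectedWalk

lemma sq_div_two_le_sum_range_sub {g μ : ℝ} (hg : 0 ≤ g) (hμ : 0 < μ) :
    g ^ 2 / (2 * μ) ≤ ∑ k ∈ Finset.range ⌈g / μ⌉₊, (g - μ * k) := by
  have hsum : ∀ n : ℕ, ∑ k ∈ Finset.range n, (g - μ * k) = n * g - μ * (n * (n - 1) / 2) := by
    intro n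
    induction n with
    | zero => simp
    | succ n ih => rw [Finset.sum_range_succ, ih]; push_cast; ring
  set n := ⌈g / μ⌉₊
  have hn : g ≤ μ * n := by rw [← div_le_iff₀' hμ]; exact Nat.le_ceil _
  have hn' : μ * (n - 1) < g := by
    have hceil := Nat.ceil_lt_add_one (div_nonneg hg hμ.le)
    have h : (n : ℝ) - 1 < g / μ := by linarith
    rwa [lt_div_iff₀' hμ] at h
  rw [hsum, div_le_iff₀ (by positivity)]
  nlinarith [mul_nonneg (sub_nonneg.2 hn) hg,
    mul_nonneg (sub_pos.2 hn').le (by positivity : 0 ≤ μ * n)]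

lemma sq_add_ceil_mul_le {g μ K : ℝ} (hμ : 0 < μ) (hK : 0 ≤ K) (hg : 1 ≤ g)
    (hKg : 16 * K * (μ⁻¹ + 1) ≤ g) :
    g ^ 2 + ⌈μ⁻¹ * g⌉₊ * K
      ≤ 3 / 16 * g ^ 2 + 7 / 4 * μ * ∑ k ∈ Finset.range ⌈μ⁻¹ * g⌉₊, (g - μ * k) := by
  rw [← div_eq_inv_mul]
  have hsum : 7 / 8 * g ^ 2 ≤ 7 / 4 * μ * ∑ k ∈ Finset.range ⌈g / μ⌉₊, (g - μ * k) := by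
    calc 7 / 8 * g ^ 2 = 7 / 4 * μ * (g ^ 2 / (2 * μ)) := by field_simp; ring
      _ ≤ _ := by gcongr; exact sq_div_two_le_sum_range_sub (by linarith) hμ
  have hceil : ⌈g / μ⌉₊ * K ≤ 1 / 16 * g ^ 2 :=
    calc ⌈g / μ⌉₊ * K ≤ (g / μ + 1) * K := by
          gcongr; exact (Nat.ceil_lt_add_one (by positivity)).le
      _ ≤ g * (K * (μ⁻¹ + 1)) := by
          rw [div_eq_mul_inv]; nlinarith [mul_nonneg hK (inv_pos.2 hμ).le]
      _ ≤ g * (g / 16) := by gcongr; linarith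
      _ = 1 / 16 * g ^ 2 := by ring
  linarith

/-- the random walk on the half-line `X_{n+1} = (X_n + Z_{n+1})⁺` with
`𝔼[Z] = −μ < 0` and `𝔼[(Z⁺)²] < ∞` is tame with respect to `V(x) = (x+1)²`: there are a
small sublevel set `[V ≤ d']`, constants `λ̃ > 0`, `β ∈ (0, 1/4)` and `b' < ∞` such that,
with `F(z) = ⌈λ̃ z^{1/2}⌉` for `z > d'` and `F(z) = 1` for `z ≤ d'`, the subsampled kernel
satisfies `Q_F V(x) ≤ β·V(x) + b'·1_{[V ≤ d']}(x)` for all `x ≥ 0`. -/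
theorem stmt_18 (ν : Measure ℝ) [IsProbabilityMeasure ν]
    (hint : Integrable (fun z : ℝ => z) ν)
    (μm : ℝ) (hmean : ∫ z, z ∂ν = -μm) (hμm : 0 < μm)
    (hsq : Integrable (fun z : ℝ => (max z 0) ^ 2) ν)
    (P : ProbabilityTheory.Kernel ℝ ℝ) [ProbabilityTheory.IsMarkovKernel P]
    (hP : ∀ x : ℝ, P x = ν.map (fun z => max (x + z) 0)) :
    ∃ d' : ℝ, 1 ≤ d' ∧
      IsSmallSet P {x : ℝ | 0 ≤ x ∧ (x + 1) ^ 2 ≤ d'} ∧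
      ∃ lamt : ℝ, 0 < lamt ∧ ∃ β : ℝ, 0 < β ∧ β < 1 / 4 ∧ ∃ b' : ℝ,
        ∀ x : ℝ, 0 ≤ x →
          ∫⁻ y, ENNReal.ofReal ((y + 1) ^ 2)
              ∂((kpow P (if (x + 1) ^ 2 ≤ d' then 1
                  else ⌈lamt * Real.sqrt ((x + 1) ^ 2)⌉₊)) x)
            ≤ ENNReal.ofReal (β * (x + 1) ^ 2
                + (if (x + 1) ^ 2 ≤ d' then b' else 0)) := by
  obtain ⟨K, hK0, hK⟩ := ReflectedWalk.exists_integral_sq_max_add_add_one_le hint hsq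
    (c := 7 / 4 * μm) (by rw [hmean]; linarith)
  have hmain :=
    ReflectedWalk.lintegral_sq_kpow_add_le hP hint hmean hμm.le hsq (by positivity) hK
  set g₀ := max 1 (16 * K * (μm⁻¹ + 1))
  have hg₀ : 1 ≤ g₀ := le_max_left _ _
  refine ⟨g₀ ^ 2, one_le_pow₀ hg₀, (ReflectedWalk.isSmallSet_Icc hP (by linarith) g₀).mono ?_,
    μm⁻¹, inv_pos.2 hμm, 3 / 16, by norm_num, by norm_num, g₀ ^ 2 + K, fun x hx => ?_⟩
  · rintro x ⟨hx, hxg⟩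
    exact ⟨hx, by nlinarith⟩
  rw [Real.sqrt_sq (by linarith)]
  split_ifs with hsmall
  · have hstep := le_of_add_le_left (hmain 1 hx)
    rw [Nat.cast_one, one_mul] at hstep
    refine hstep.trans ?_
    rw [← ofReal_add (by positivity) hK0]
    exact ofReal_le_ofReal (by nlinarith)
  · have hg : g₀ < x + 1 := by nlinarith
    refine ENNReal.le_of_add_le_add_right ofReal_ne_top ((hmain _ hx).trans ?_)
    rw [add_zero, ← ofReal_natCast, ← ofReal_mul (Nat.cast_nonneg _),
      ← ofReal_add (by positivity) (by positivity)]
    exact (ofReal_le_ofReal (sq_add_ceil_mul_le hμm hK0 (by linarith)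
      ((le_max_right _ _).trans hg.le))).trans ofReal_add_le
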